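/- For all real z > 0, the Digamma function ψ satisfies the upper bound ψ(z + 1/2) − ψ(z) < log(1 + 1/(2z)) + 1/z − 2/(2z + 1). -/

import Mathlib

noncomputable def digamma (z : ℝ) : ℝ := deriv Real.Gamma z / Real.Gamma z

/-!
Let `H(z)` be `ψ(z + 1/2) - ψ(z)` minus the claimed bound. The recurrence `ψ(z + 1) = ψ(z) + 1/z`
and `log y ≥ 1 - 1/y` give `H(z) < H(z + 1)`, while `H(z) → 0` as `z → ∞` because
`0 ≤ ψ(z + 1/2) - ψ(z) ≤ 1/z` by monotonicity of `ψ` (convexity of `log Γ`). Hence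
`H(z) < H(z + 1) ≤ lim H(z + n) = 0`.
-/

open Real Filter Set Topology

theorem digamma_add_one {z : ℝ} (hz : ∀ m : ℕ, z ≠ -m) : digamma (z + 1) = digamma z + 1 / z := by
  have hz0 : z ≠ 0 := by simpa using hz 0
  have hz1 : ∀ m : ℕ, z + 1 ≠ -m := fun m h => hz (m + 1) (by push_cast; linarith)
  have hshift : (fun x => Gamma (x + 1)) =ᶠ[𝓝 z] fun x => x * Gamma x := by
    filter_upwards [eventually_ne_nhds hz0] with x hx using Gamma_add_one hx
  calc digamma (z + 1) = logDeriv (Gamma ∘ fun x => x + 1) z := by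
        rw [logDeriv_comp (g := fun x => x + 1) (differentiableAt_Gamma hz1) (by fun_prop)]
        simp [digamma, logDeriv_apply]
    _ = logDeriv (fun x => x * Gamma x) z := (logDeriv_congr_nhds hshift).self_of_nhds
    _ = digamma z + 1 / z := by
        rw [logDeriv_mul (f := fun x => x) z hz0 (Gamma_ne_zero hz) differentiableAt_id
          (differentiableAt_Gamma hz), logDeriv_id', add_comm]
        rfl

theorem digamma_add_one_of_pos {z : ℝ} (hz : 0 < z) : digamma (z + 1) = digamma z + 1 / z :=
  digamma_add_one fun m => ((neg_nonpos.mpr m.cast_nonneg).trans_lt hz).ne'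

theorem digamma_monotoneOn : MonotoneOn digamma (Ioi 0) := by
  have hGamma : ∀ x ∈ Ioi (0 : ℝ), DifferentiableAt ℝ Gamma x ∧ Gamma x ≠ 0 := fun x hx =>
    ⟨differentiableOn_Gamma_Ioi.differentiableAt (Ioi_mem_nhds hx), (Gamma_pos_of_pos hx).ne'⟩
  have hderiv := convexOn_log_Gamma.monotoneOn_deriv fun x hx =>
    (hGamma x hx).1.log (hGamma x hx).2
  intro a ha b hb hab
  have := hderiv ha hb hab
  rwa [deriv_log_comp_eq_logDeriv (hGamma a ha).1 (hGamma a ha).2,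
    deriv_log_comp_eq_logDeriv (hGamma b hb).1 (hGamma b hb).2] at this

noncomputable def digammaHalfDiff (z : ℝ) : ℝ := digamma (z + 1 / 2) - digamma z

theorem digammaHalfDiff_add_one {z : ℝ} (hz : 0 < z) :
    digammaHalfDiff (z + 1) = digammaHalfDiff z + 2 / (2 * z + 1) - 1 / z := by
  have hhalf : 1 / (z + 1 / 2) = 2 / (2 * z + 1) := by field_simp
  unfold digammaHalfDiff
  rw [add_right_comm, digamma_add_one_of_pos (by positivity), digamma_add_one_of_pos hz, hhalf]
  ring

theorem digammaHalfDiff_nonneg {z : ℝ} (hz : 0 < z) : 0 ≤ digammaHalfDiff z :=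
  sub_nonneg.mpr (digamma_monotoneOn hz (by positivity : (0 : ℝ) < z + 1 / 2) (by linarith))

theorem digammaHalfDiff_le_one_div {z : ℝ} (hz : 0 < z) : digammaHalfDiff z ≤ 1 / z := by
  have hmono := digamma_monotoneOn (by positivity : (0 : ℝ) < z + 1 / 2)
    (by positivity : (0 : ℝ) < z + 1) (by linarith)
  have hrec := digamma_add_one_of_pos hz
  unfold digammaHalfDiff
  linarith

theorem tendsto_digammaHalfDiff_atTop : Tendsto digammaHalfDiff atTop (𝓝 0) :=
  squeeze_zero' ((eventually_gt_atTop 0).mono fun _ hz => digammaHalfDiff_nonneg hz)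
    ((eventually_gt_atTop 0).mono fun _ hz => digammaHalfDiff_le_one_div hz)
    (tendsto_const_nhds.div_atTop tendsto_id)

noncomputable def digammaHalfDiffBound (z : ℝ) : ℝ :=
  log (1 + 1 / (2 * z)) + 1 / z - 2 / (2 * z + 1)

theorem digammaHalfDiffBound_add_one_lt {z : ℝ} (hz : 0 < z) :
    digammaHalfDiffBound (z + 1) < digammaHalfDiffBound z + 2 / (2 * z + 1) - 1 / z := by
  have hy : 0 < (2 * z + 1) * (2 * z + 2) / (2 * z * (2 * z + 3)) := by positivity
  have hlog : log (1 + 1 / (2 * z)) - log (1 + 1 / (2 * (z + 1)))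
      = log ((2 * z + 1) * (2 * z + 2) / (2 * z * (2 * z + 3))) := by
    rw [← log_div (by positivity) (by positivity)]
    congr 1
    field_simp
    ring
  have hinv : 1 - ((2 * z + 1) * (2 * z + 2) / (2 * z * (2 * z + 3)))⁻¹
      = 1 / ((2 * z + 1) * (z + 1)) := by
    field_simp
    ring
  have hcmp : 1 / ((z + 1) * (2 * z + 3)) < 1 / ((2 * z + 1) * (z + 1)) :=
    one_div_lt_one_div_of_lt (by positivity) (by nlinarith)
  have hrhs : 1 / (z + 1) - 2 / (2 * (z + 1) + 1) = 1 / ((z + 1) * (2 * z + 3)) := by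
    field_simp
    ring
  have := one_sub_inv_le_log_of_pos hy
  unfold digammaHalfDiffBound
  linarith

theorem tendsto_digammaHalfDiffBound_atTop : Tendsto digammaHalfDiffBound atTop (𝓝 0) := by
  have htwo : Tendsto (fun z : ℝ => 2 * z) atTop atTop := tendsto_id.const_mul_atTop two_pos
  have hinv_two : Tendsto (fun z : ℝ => 1 / (2 * z)) atTop (𝓝 0) :=
    tendsto_const_nhds.div_atTop htwo
  have hlog : Tendsto (fun z : ℝ => log (1 + 1 / (2 * z))) atTop (𝓝 0) := by
    have := (continuousAt_log (by norm_num : (1 + 0 : ℝ) ≠ 0)).tendsto.comp (hinv_two.const_add 1)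
    rwa [add_zero, log_one] at this
  have hinv : Tendsto (fun z : ℝ => 1 / z) atTop (𝓝 0) := tendsto_const_nhds.div_atTop tendsto_id
  have hlast : Tendsto (fun z : ℝ => 2 / (2 * z + 1)) atTop (𝓝 0) :=
    tendsto_const_nhds.div_atTop (tendsto_atTop_add_const_right _ 1 htwo)
  have := (hlog.add hinv).sub hlast
  rwa [add_zero, sub_zero] at this

theorem digamma_upper_bound (z : ℝ) (hz : 0 < z) :
    digamma (z + 1/2) - digamma z
      < Real.log (1 + 1 / (2 * z)) + 1 / z - 2 / (2 * z + 1) := by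
  set H : ℝ → ℝ := fun x => digammaHalfDiff x - digammaHalfDiffBound x
  have hstep : ∀ n : ℕ, H (z + n) < H (z + (n + 1 : ℕ)) := fun n => by
    have hzn : 0 < z + n := by positivity
    have := digammaHalfDiffBound_add_one_lt hzn
    simp only [H, Nat.cast_succ, ← add_assoc, digammaHalfDiff_add_one hzn]
    linarith
  have hlim : Tendsto (fun n : ℕ => H (z + n)) atTop (𝓝 0) := by
    have := (tendsto_digammaHalfDiff_atTop.sub tendsto_digammaHalfDiffBound_atTop).comp
      (tendsto_atTop_add_const_left atTop z tendsto_natCast_atTop_atTop)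
    rwa [sub_zero] at this
  have hmono : StrictMono fun n : ℕ => H (z + n) := strictMono_nat_of_lt_succ hstep
  have hneg : H z < 0 := by
    simpa using (hmono zero_lt_one).trans_le (hmono.monotone.ge_of_tendsto hlim 1)
  simpa [H, digammaHalfDiff, digammaHalfDiffBound, sub_neg] using hneg
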